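/- arXiv:2502.11714 — 3 statements merged into one kernel-verified Lean document; each statement's English description precedes it below -/
import Mathlib

section
/- Let a < b and let v, w ∈ C²([a,b]) with v(a) = w(a), v(b) = w(b), v ≤ w on [a,b], and v concave (v'' ≤ 0). Then ∫_a^b √(1 + (v')²) dx ≤ ∫_a^b √(1 + (w')²) dx. -/
open MeasureTheory Set intervalIntegral

private lemma sqrt1p_pos (s : ℝ) : 0 < Real.sqrt (1 + s ^ 2) :=
  Real.sqrt_pos.2 (by positivity)

private lemma key_ineq (s t : ℝ) :
    Real.sqrt (1 + s ^ 2) + s / Real.sqrt (1 + s ^ 2) * (t - s) ≤ Real.sqrt (1 + t ^ 2) := by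
  set X := Real.sqrt (1 + s ^ 2) with hXdef
  set Y := Real.sqrt (1 + t ^ 2) with hYdef
  have hX : 0 < X := sqrt1p_pos s
  have hY : 0 ≤ Y := Real.sqrt_nonneg _
  have hX2 : X ^ 2 = 1 + s ^ 2 := Real.sq_sqrt (by positivity)
  have hY2 : Y ^ 2 = 1 + t ^ 2 := Real.sq_sqrt (by positivity)
  have hXY : 1 + s * t ≤ X * Y := by
    nlinarith [sq_nonneg (X * Y - (1 + s * t)), sq_nonneg (X * Y + (1 + s * t)),
      sq_nonneg (s - t), mul_nonneg hX.le hY]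
  have h2 : X + s / X * (t - s) = (X ^ 2 + s * (t - s)) / X := by field_simp
  rw [h2, div_le_iff₀ hX]
  nlinarith [hXY]

/-- derivative of s ↦ s / √(1+s²) -/
noncomputable def phi' (s : ℝ) : ℝ :=
  (Real.sqrt (1 + s ^ 2) - s * (s / Real.sqrt (1 + s ^ 2))) / Real.sqrt (1 + s ^ 2) ^ 2

private lemma phi'_nonneg (s : ℝ) : 0 ≤ phi' s := by
  have hX : 0 < Real.sqrt (1 + s ^ 2) := sqrt1p_pos s
  have hX2 : Real.sqrt (1 + s ^ 2) ^ 2 = 1 + s ^ 2 := Real.sq_sqrt (by positivity)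
  have hnum : Real.sqrt (1 + s ^ 2) - s * (s / Real.sqrt (1 + s ^ 2))
      = 1 / Real.sqrt (1 + s ^ 2) := by
    field_simp
    nlinarith [hX2]
  rw [phi', hnum]
  positivity

private lemma continuous_phi' : Continuous phi' := by
  have h1 : Continuous fun s : ℝ => Real.sqrt (1 + s ^ 2) := by
    exact Real.continuous_sqrt.comp (by continuity)
  apply Continuous.div
  · exact h1.sub (continuous_id.mul ((continuous_id.div h1) fun s => (sqrt1p_pos s).ne'))
  · exact h1.pow 2
  · exact fun s => by positivity

private lemma hasDerivAt_phi (s : ℝ) :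
    HasDerivAt (fun t => t / Real.sqrt (1 + t ^ 2)) (phi' s) s := by
  have hX : 0 < Real.sqrt (1 + s ^ 2) := sqrt1p_pos s
  have h1 : HasDerivAt (fun t : ℝ => 1 + t ^ 2) (2 * s) s := by
    simpa using (hasDerivAt_pow 2 s).const_add 1
  have h2 : HasDerivAt (fun t : ℝ => Real.sqrt (1 + t ^ 2))
      (2 * s / (2 * Real.sqrt (1 + s ^ 2))) s := h1.sqrt (by positivity)
  have h3 := (hasDerivAt_id s).fun_div h2 hX.ne'
  have h4 : 2 * s / (2 * Real.sqrt (1 + s ^ 2)) = s / Real.sqrt (1 + s ^ 2) :=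
    mul_div_mul_left _ _ two_ne_zero
  simpa [phi', h4] using h3

theorem stmt_5 (a b : ℝ) (hab : a < b) (v w : ℝ → ℝ)
    (hv : ContDiffOn ℝ 2 v (Set.Icc a b)) (hw : ContDiffOn ℝ 2 w (Set.Icc a b))
    (ha : v a = w a) (hb : v b = w b)
    (hle : ∀ x ∈ Set.Icc a b, v x ≤ w x)
    (hconc : ∀ x ∈ Set.Icc a b, deriv (deriv v) x ≤ 0) :
    (∫ x in a..b, Real.sqrt (1 + (deriv v x) ^ 2)) ≤
      ∫ x in a..b, Real.sqrt (1 + (deriv w x) ^ 2) := by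
  have hs : UniqueDiffOn ℝ (Icc a b) := uniqueDiffOn_Icc hab
  set V : ℝ → ℝ := derivWithin v (Icc a b) with hVdef
  set W : ℝ → ℝ := derivWithin w (Icc a b) with hWdef
  have hV1 : ContDiffOn ℝ 1 V (Icc a b) := hv.derivWithin hs (by norm_num)
  have hW1 : ContDiffOn ℝ 1 W (Icc a b) := hw.derivWithin hs (by norm_num)
  have hVc : ContinuousOn V (Icc a b) := hV1.continuousOn
  have hWc : ContinuousOn W (Icc a b) := hW1.continuousOn
  set A : ℝ → ℝ := derivWithin V (Icc a b) with hAdef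
  have hAc : ContinuousOn A (Icc a b) := hV1.continuousOn_derivWithin hs le_rfl
  have hv' : ∀ x ∈ Icc a b, HasDerivWithinAt v (V x) (Icc a b) x := fun x hx =>
    ((hv.differentiableOn (by norm_num)) x hx).hasDerivWithinAt
  have hw' : ∀ x ∈ Icc a b, HasDerivWithinAt w (W x) (Icc a b) x := fun x hx =>
    ((hw.differentiableOn (by norm_num)) x hx).hasDerivWithinAt
  have hVd : ∀ x ∈ Icc a b, HasDerivWithinAt V (A x) (Icc a b) x := fun x hx =>
    ((hV1.differentiableOn one_ne_zero) x hx).hasDerivWithinAt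
  -- deriv v = V on Ioo
  have hVeq : ∀ x ∈ Ioo a b, deriv v x = V x := fun x hx =>
    (derivWithin_of_mem_nhds (Icc_mem_nhds hx.1 hx.2)).symm
  have hWeq : ∀ x ∈ Ioo a b, deriv w x = W x := fun x hx =>
    (derivWithin_of_mem_nhds (Icc_mem_nhds hx.1 hx.2)).symm
  -- A ≤ 0 on Ioo
  have hA_nonpos : ∀ x ∈ Ioo a b, A x ≤ 0 := by
    intro x hx
    have hmem : Icc a b ∈ nhds x := Icc_mem_nhds hx.1 hx.2
    have h1 : A x = deriv V x := derivWithin_of_mem_nhds hmem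
    have h2 : V =ᶠ[nhds x] deriv v := by
      filter_upwards [isOpen_Ioo.mem_nhds hx] with y hy
      exact (hVeq y hy).symm
    rw [h1, h2.deriv_eq]
    exact hconc x (Ioo_subset_Icc_self hx)
  -- the auxiliary functions
  set g : ℝ → ℝ := fun x => w x - v x with hgdef
  have hg' : ∀ x ∈ Icc a b, HasDerivWithinAt g (W x - V x) (Icc a b) x := fun x hx =>
    (hw' x hx).sub (hv' x hx)
  have hgc : ContinuousOn g (Icc a b) := hw.continuousOn.sub hv.continuousOn
  have hg0 : ∀ x ∈ Icc a b, 0 ≤ g x := fun x hx => sub_nonneg.2 (hle x hx)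
  have hga : g a = 0 := by simp [hgdef, ha]
  have hgb : g b = 0 := by simp [hgdef, hb]
  set F : ℝ → ℝ := fun x => V x / Real.sqrt (1 + V x ^ 2) with hFdef
  have hF' : ∀ x ∈ Icc a b, HasDerivWithinAt F (phi' (V x) * A x) (Icc a b) x := fun x hx =>
    (hasDerivAt_phi (V x)).comp_hasDerivWithinAt x (hVd x hx)
  have hFc : ContinuousOn F (Icc a b) := by
    apply hVc.div
    · exact Real.continuous_sqrt.comp_continuousOn (continuousOn_const.add (hVc.pow 2))
    · exact fun x _ => (sqrt1p_pos (V x)).ne'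
  -- continuity of the derivative pieces
  have hcont1 : ContinuousOn (fun x => phi' (V x) * A x * g x) (Icc a b) :=
    ((continuous_phi'.comp_continuousOn hVc).mul hAc).mul hgc
  have hcont2 : ContinuousOn (fun x => F x * (W x - V x)) (Icc a b) :=
    hFc.mul (hWc.sub hVc)
  have hint1 : IntervalIntegrable (fun x => phi' (V x) * A x * g x) volume a b := by
    rw [intervalIntegrable_iff_integrableOn_Icc_of_le hab.le]
    exact hcont1.integrableOn_compact isCompact_Icc
  have hint2 : IntervalIntegrable (fun x => F x * (W x - V x)) volume a b := by
    rw [intervalIntegrable_iff_integrableOn_Icc_of_le hab.le]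
    exact hcont2.integrableOn_compact isCompact_Icc
  -- integration by parts via FTC on F * g
  have hftc : (∫ x in a..b, (phi' (V x) * A x * g x + F x * (W x - V x))) =
      F b * g b - F a * g a := by
    apply integral_eq_sub_of_hasDerivAt_of_le hab.le (hFc.mul hgc)
    · intro x hx
      have hmem : Icc a b ∈ nhds x := Icc_mem_nhds hx.1 hx.2
      exact (((hF' x (Ioo_subset_Icc_self hx)).mul
        (hg' x (Ioo_subset_Icc_self hx))).hasDerivAt hmem)
    · exact hint1.add hint2
  have hftc0 : (∫ x in a..b, (phi' (V x) * A x * g x + F x * (W x - V x))) = 0 := by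
    rw [hftc, hga, hgb]; ring
  have hsplit : (∫ x in a..b, phi' (V x) * A x * g x) +
      (∫ x in a..b, F x * (W x - V x)) = 0 := by
    rw [← integral_add hint1 hint2]; exact hftc0
  -- first integral is ≤ 0
  have hneg : (∫ x in a..b, phi' (V x) * A x * g x) ≤ 0 := by
    have : 0 ≤ ∫ x in a..b, -(phi' (V x) * A x * g x) := by
      apply integral_nonneg_of_ae_restrict hab.le
      rw [← Measure.restrict_congr_set Ioo_ae_eq_Icc]
      filter_upwards [self_mem_ae_restrict measurableSet_Ioo] with x hx
      simp only [Pi.zero_apply, le_neg, neg_zero]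
      have h1 := phi'_nonneg (V x)
      have h2 := hA_nonpos x hx
      have h3 := hg0 x (Ioo_subset_Icc_self hx)
      exact mul_nonpos_of_nonpos_of_nonneg (mul_nonpos_of_nonneg_of_nonpos h1 h2) h3
    rw [intervalIntegral.integral_neg] at this
    linarith
  have hkey : 0 ≤ ∫ x in a..b, F x * (W x - V x) := by linarith
  -- pointwise convexity inequality and monotonicity
  have hintV : IntervalIntegrable (fun x => Real.sqrt (1 + V x ^ 2)) volume a b := by
    rw [intervalIntegrable_iff_integrableOn_Icc_of_le hab.le]
    exact (Real.continuous_sqrt.comp_continuousOn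
      (continuousOn_const.add (hVc.pow 2))).integrableOn_compact isCompact_Icc
  have hintW : IntervalIntegrable (fun x => Real.sqrt (1 + W x ^ 2)) volume a b := by
    rw [intervalIntegrable_iff_integrableOn_Icc_of_le hab.le]
    exact (Real.continuous_sqrt.comp_continuousOn
      (continuousOn_const.add (hWc.pow 2))).integrableOn_compact isCompact_Icc
  have hmono : (∫ x in a..b, (Real.sqrt (1 + V x ^ 2) + F x * (W x - V x))) ≤
      ∫ x in a..b, Real.sqrt (1 + W x ^ 2) := by
    apply integral_mono_on hab.le (hintV.add hint2) hintW
    intro x _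
    exact key_ineq (V x) (W x)
  have hmain : (∫ x in a..b, Real.sqrt (1 + V x ^ 2)) ≤
      ∫ x in a..b, Real.sqrt (1 + W x ^ 2) := by
    have := integral_add hintV hint2
    calc (∫ x in a..b, Real.sqrt (1 + V x ^ 2))
        ≤ (∫ x in a..b, Real.sqrt (1 + V x ^ 2)) +
          ∫ x in a..b, F x * (W x - V x) := le_add_of_nonneg_right hkey
      _ = ∫ x in a..b, (Real.sqrt (1 + V x ^ 2) + F x * (W x - V x)) := this.symm
      _ ≤ _ := hmono
  -- translate between deriv and derivWithin (a.e.)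
  have hae : ∀ᵐ x : ℝ ∂volume, x ≠ b := by
    have h0 : volume ({b} : Set ℝ) = 0 := Real.volume_singleton
    rw [ae_iff]
    simpa using h0
  have hcongrV : (∫ x in a..b, Real.sqrt (1 + (deriv v x) ^ 2)) =
      ∫ x in a..b, Real.sqrt (1 + V x ^ 2) := by
    apply intervalIntegral.integral_congr_ae
    filter_upwards [hae] with x hxb hxI
    rw [uIoc_of_le hab.le] at hxI
    rw [hVeq x ⟨hxI.1, lt_of_le_of_ne hxI.2 hxb⟩]
  have hcongrW : (∫ x in a..b, Real.sqrt (1 + (deriv w x) ^ 2)) =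
      ∫ x in a..b, Real.sqrt (1 + W x ^ 2) := by
    apply intervalIntegral.integral_congr_ae
    filter_upwards [hae] with x hxb hxI
    rw [uIoc_of_le hab.le] at hxI
    rw [hWeq x ⟨hxI.1, lt_of_le_of_ne hxI.2 hxb⟩]
  rw [hcongrV, hcongrW]
  exact hmain
end

section
/- Let F ∈ W^{1,2}(0,1) with F(0) = 0, let α > 0, and suppose w ∈ W^{1,2}(0,1) satisfies w(0) = 0 and ‖w' − F'‖_* ≤ α, where ‖φ‖_* := sup { ∫₀¹ φφ̂ dx : φ̂ ∈ L²(0,1), TV(φ̂,(0,1)) ≤ 1 }. Then w(1) = F(1) and ‖w − F‖_∞ ≤ α. -/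
open MeasureTheory Set

lemma evar_const_sub (c : ℝ) (f : ℝ → ℝ) (s : Set ℝ) :
    eVariationOn (fun x => c - f x) s = eVariationOn f s := by
  unfold eVariationOn
  apply iSup_congr
  intro p
  apply Finset.sum_congr rfl
  intro i _
  rw [edist_dist, edist_dist, Real.dist_eq, Real.dist_eq]
  congr 1
  rw [abs_sub_comm]
  ring_nf

theorem stmt_10 (F F' w w' : ℝ → ℝ) (α : ℝ) (hα : 0 < α)
    (hF' : IntervalIntegrable F' volume 0 1)
    (hF'2 : IntervalIntegrable (fun x => (F' x) ^ 2) volume 0 1)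
    (hF : ∀ t, F t = ∫ x in (0 : ℝ)..t, F' x)
    (hw' : IntervalIntegrable w' volume 0 1)
    (hw'2 : IntervalIntegrable (fun x => (w' x) ^ 2) volume 0 1)
    (hw : ∀ t, w t = ∫ x in (0 : ℝ)..t, w' x)
    (hdual : ∀ φ : ℝ → ℝ, Measurable φ →
      IntervalIntegrable (fun x => (φ x) ^ 2) volume 0 1 →
      eVariationOn φ (Set.Ioo (0 : ℝ) 1) ≤ 1 →
      (∫ x in (0 : ℝ)..1, (w' x - F' x) * φ x) ≤ α) :
    w 1 = F 1 ∧ ∀ x ∈ Set.Icc (0 : ℝ) 1, |w x - F x| ≤ α := by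
  set g : ℝ → ℝ := fun x => w' x - F' x with hg
  have hgint : IntervalIntegrable g volume 0 1 := hw'.sub hF'
  -- Step 1 : ∫₀¹ g = 0 via constant test functions
  have hconst : ∀ c : ℝ, (∫ x in (0:ℝ)..1, g x) * c ≤ α := by
    intro c
    have h := hdual (fun _ => c) measurable_const (intervalIntegrable_const)
      (by
        rw [eVariationOn.constant_on]
        · exact zero_le_one
        · intro a ha b hb
          simp only [mem_image] at ha hb
          obtain ⟨_, _, rfl⟩ := ha; obtain ⟨_, _, rfl⟩ := hb; rfl)
    calc (∫ x in (0:ℝ)..1, g x) * c = ∫ x in (0:ℝ)..1, g x * c :=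
          (intervalIntegral.integral_mul_const c g).symm
      _ ≤ α := h
  have hI0 : (∫ x in (0:ℝ)..1, g x) = 0 := by
    by_contra h
    have h1 := hconst ((α + 1) / (∫ x in (0:ℝ)..1, g x))
    rw [mul_div_cancel₀ _ h] at h1
    linarith
  have hwF1 : w 1 = F 1 := by
    have := intervalIntegral.integral_sub hw' hF'
    rw [hw 1, hF 1]
    have : w 1 - F 1 = ∫ x in (0:ℝ)..1, g x := by
      rw [hw 1, hF 1, ← intervalIntegral.integral_sub hw' hF']
    rw [hw 1, hF 1] at this
    linarith [hI0 ▸ this]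
  refine ⟨hwF1, ?_⟩
  -- Step 2 : pointwise bound
  intro x₀ hx₀
  obtain ⟨hx₀0, hx₀1⟩ := hx₀
  set ψ : ℝ → ℝ := fun x => if x₀ < x then 1 else 0 with hψdef
  have hψmono : Monotone ψ := by
    intro a b hab
    simp only [hψdef]
    split_ifs with h1 h2
    · exact le_rfl
    · exact absurd (h1.trans_le hab) h2
    · norm_num
    · exact le_rfl
  have hψmeas : Measurable ψ := by
    apply Measurable.ite _ measurable_const measurable_const
    exact measurableSet_Ioi
  have hψbd : ∀ x, ‖ψ x‖ ≤ 1 := by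
    intro x; simp only [hψdef]; split_ifs <;> simp
  -- integrability of g * ψ on subintervals
  have hgψ : IntervalIntegrable (fun x => g x * ψ x) volume 0 1 := by
    have h1 : IntervalIntegrable (fun x => ψ x * g x) volume 0 1 :=
      ⟨hgint.1.bdd_mul hψmeas.aestronglyMeasurable (Filter.Eventually.of_forall hψbd),
       hgint.2.bdd_mul hψmeas.aestronglyMeasurable (Filter.Eventually.of_forall hψbd)⟩
    simpa [mul_comm] using h1
  have hsubA : Set.uIcc (0:ℝ) x₀ ⊆ Set.uIcc (0:ℝ) 1 := by
    rw [uIcc_of_le hx₀0, uIcc_of_le (by norm_num : (0:ℝ) ≤ 1)]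
    exact Icc_subset_Icc le_rfl hx₀1
  have hsubB : Set.uIcc x₀ (1:ℝ) ⊆ Set.uIcc (0:ℝ) 1 := by
    rw [uIcc_of_le hx₀1, uIcc_of_le (by norm_num : (0:ℝ) ≤ 1)]
    exact Icc_subset_Icc hx₀0 le_rfl
  have hgsub : IntervalIntegrable g volume 0 x₀ :=
    hgint.mono_set hsubA
  have hgsub' : IntervalIntegrable g volume x₀ 1 :=
    hgint.mono_set hsubB
  have hgψ1 : IntervalIntegrable (fun x => g x * ψ x) volume 0 x₀ :=
    hgψ.mono_set hsubA
  have hgψ2 : IntervalIntegrable (fun x => g x * ψ x) volume x₀ 1 :=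
    hgψ.mono_set hsubB
  -- value of ∫ g ψ
  have hval : (∫ x in (0:ℝ)..1, g x * ψ x) = ∫ x in x₀..(1:ℝ), g x := by
    rw [← intervalIntegral.integral_add_adjacent_intervals hgψ1 hgψ2]
    have e1 : (∫ x in (0:ℝ)..x₀, g x * ψ x) = 0 := by
      rw [intervalIntegral.integral_congr (g := fun _ => (0:ℝ))]
      · simp
      · intro x hx
        rw [uIcc_of_le hx₀0] at hx
        simp only [hψdef]
        rw [if_neg (not_lt.2 hx.2), mul_zero]
    have e2 : (∫ x in x₀..(1:ℝ), g x * ψ x) = ∫ x in x₀..(1:ℝ), g x := by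
      apply intervalIntegral.integral_congr_ae
      filter_upwards with x hx
      rw [uIoc_of_le hx₀1] at hx
      simp only [hψdef]
      rw [if_pos hx.1, mul_one]
    rw [e1, e2, zero_add]
  -- variation bounds
  have hψvar : eVariationOn ψ (Set.Ioo (0:ℝ) 1) ≤ 1 := by
    calc eVariationOn ψ (Set.Ioo (0:ℝ) 1)
        ≤ eVariationOn ψ (Set.Icc (0:ℝ) 1) := eVariationOn.mono ψ Ioo_subset_Icc_self
      _ = eVariationOn ψ (Set.Icc (0:ℝ) 1 ∩ Set.Icc (0:ℝ) 1) := by rw [inter_self]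
      _ ≤ ENNReal.ofReal (ψ 1 - ψ 0) :=
          (hψmono.monotoneOn _).eVariationOn_le (by norm_num) (by norm_num)
      _ ≤ 1 := by
          rw [← ENNReal.ofReal_one]
          apply ENNReal.ofReal_le_ofReal
          simp only [hψdef]
          split_ifs <;> norm_num
  have hχvar : eVariationOn (fun x => 1 - ψ x) (Set.Ioo (0:ℝ) 1) ≤ 1 := by
    rw [evar_const_sub]; exact hψvar
  -- squared integrability
  have hψsq : IntervalIntegrable (fun x => (ψ x) ^ 2) volume 0 1 := by
    apply IntervalIntegrable.mono_fun (intervalIntegrable_const (c := (1:ℝ)))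
    · exact ((hψmeas.pow_const 2).aestronglyMeasurable).restrict
    · filter_upwards with x
      simp only [hψdef, Real.norm_eq_abs]
      split_ifs <;> norm_num
  have hχsq : IntervalIntegrable (fun x => ((1:ℝ) - ψ x) ^ 2) volume 0 1 := by
    apply IntervalIntegrable.mono_fun (intervalIntegrable_const (c := (1:ℝ)))
    · exact (((measurable_const.sub hψmeas).pow_const 2).aestronglyMeasurable).restrict
    · filter_upwards with x
      simp only [hψdef, Real.norm_eq_abs]
      split_ifs <;> norm_num
  -- dual tests
  have t1 : (∫ x in x₀..(1:ℝ), g x) ≤ α := by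
    have h1 : (∫ x in (0:ℝ)..1, g x * ψ x) ≤ α := hdual ψ hψmeas hψsq hψvar
    rwa [hval] at h1
  have t2 : -(∫ x in x₀..(1:ℝ), g x) ≤ α := by
    have h2 : (∫ x in (0:ℝ)..1, g x * (1 - ψ x)) ≤ α :=
      hdual (fun x => 1 - ψ x) (measurable_const.sub hψmeas) hχsq hχvar
    have heq : (∫ x in (0:ℝ)..1, g x * (1 - ψ x))
        = (∫ x in (0:ℝ)..1, g x) - ∫ x in (0:ℝ)..1, g x * ψ x := by
      have : (∫ x in (0:ℝ)..1, (g x - g x * ψ x))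
          = (∫ x in (0:ℝ)..1, g x) - ∫ x in (0:ℝ)..1, g x * ψ x :=
        intervalIntegral.integral_sub hgint hgψ
      rw [← this]
      apply intervalIntegral.integral_congr
      intro x _; ring
    rw [heq, hI0, hval, zero_sub] at h2
    exact h2
  -- conclude
  have hsplit : (∫ x in (0:ℝ)..x₀, g x) + (∫ x in x₀..(1:ℝ), g x) = 0 := by
    rw [intervalIntegral.integral_add_adjacent_intervals hgsub hgsub', hI0]
  have hwx : w x₀ - F x₀ = ∫ x in (0:ℝ)..x₀, g x := by
    rw [hw x₀, hF x₀, ← intervalIntegral.integral_sub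
      (hw'.mono_set hsubA)
      (hF'.mono_set hsubA)]
  rw [abs_le, hwx]
  constructor <;> linarith
end

section
/- For a fixed continuous function F : [0,1] → ℝ with F(0) = 0, define for t > 0 the functional 𝓕_t on W^{1,2}(0,1) by 𝓕_t(v) = ∫₀¹ |v'|² dx if ‖v − F‖_∞ ≤ t, v(0) = 0, v(1) = F(1), and 𝓕_t(v) = +∞ otherwise. If α_n → α in (0,∞) and v ∈ W^{1,2}(0,1) satisfies 𝓕_α(v) < ∞, then the functions v_n := (α_n/α)(v − F) + F satisfy: ‖v_n − F‖_∞ ≤ α_n, v_n(0) = 0, v_n(1) = F(1), v_n → v uniformly, and limsup_n ∫₀¹ |v_n'|² dx ≤ ∫₀¹ |v'|² dx, provided F ∈ W^{1,2}(0,1). -/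
open MeasureTheory Topology Filter Set

theorem stmt_16 (F F' v v' : ℝ → ℝ)
    (hFcont : ContinuousOn F (Set.Icc (0 : ℝ) 1)) (hF0 : F 0 = 0)
    (hF' : IntervalIntegrable F' volume 0 1)
    (hF'2 : IntervalIntegrable (fun x => (F' x) ^ 2) volume 0 1)
    (hF : ∀ t, F t = ∫ x in (0 : ℝ)..t, F' x)
    (α : ℝ) (hα : 0 < α) (a : ℕ → ℝ) (ha_pos : ∀ n, 0 < a n)
    (ha : Tendsto a atTop (𝓝 α))
    (hv' : IntervalIntegrable v' volume 0 1)
    (hv'2 : IntervalIntegrable (fun x => (v' x) ^ 2) volume 0 1)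
    (hv : ∀ t, v t = ∫ x in (0 : ℝ)..t, v' x)
    (hvbd : ∀ x ∈ Set.Icc (0 : ℝ) 1, |v x - F x| ≤ α)
    (hv1 : v 1 = F 1) :
    (∀ n, ∀ x ∈ Set.Icc (0 : ℝ) 1, |(a n / α) * (v x - F x) + F x - F x| ≤ a n) ∧
    (∀ n, (a n / α) * (v 0 - F 0) + F 0 = 0) ∧
    (∀ n, (a n / α) * (v 1 - F 1) + F 1 = F 1) ∧
    TendstoUniformlyOn (fun n x => (a n / α) * (v x - F x) + F x) v atTop (Set.Icc (0 : ℝ) 1) ∧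
    Filter.limsup (fun n => ∫ x in (0 : ℝ)..1, ((a n / α) * (v' x - F' x) + F' x) ^ 2) atTop ≤
      ∫ x in (0 : ℝ)..1, (v' x) ^ 2 := by
  have hc : Tendsto (fun n => a n / α) atTop (𝓝 1) := by
    have := ha.div_const α
    rwa [div_self hα.ne'] at this
  -- integrability of v' * F'
  have hvF' : IntervalIntegrable (fun x => v' x * F' x) volume 0 1 := by
    rw [intervalIntegrable_iff] at hv' hF' hv'2 hF'2 ⊢
    have hm : AEStronglyMeasurable (fun x => v' x * F' x)
        (volume.restrict (Set.uIoc (0:ℝ) 1)) :=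
      hv'.aestronglyMeasurable.mul hF'.aestronglyMeasurable
    refine Integrable.mono' (((hv'2.add hF'2).div_const 2)) hm ?_
    filter_upwards with x
    simp only [Pi.add_apply, Real.norm_eq_abs, abs_mul]
    have h1 := sq_abs (v' x)
    have h2 := sq_abs (F' x)
    nlinarith [sq_nonneg (|v' x| - |F' x|), abs_nonneg (v' x), abs_nonneg (F' x)]
  have hg2 : IntervalIntegrable (fun x => (v' x - F' x) ^ 2) volume 0 1 := by
    have h := (hv'2.sub (hvF'.const_mul 2)).add hF'2
    have he : (fun x => (v' x)^2 - 2 * (v' x * F' x) + (F' x)^2)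
        = fun x => (v' x - F' x)^2 := by funext x; ring
    rwa [he] at h
  have hgF : IntervalIntegrable (fun x => (v' x - F' x) * F' x) volume 0 1 := by
    have h := hvF'.sub hF'2
    have he : (fun x => v' x * F' x - (F' x)^2) = fun x => (v' x - F' x) * F' x := by
      funext x; ring
    rwa [he] at h
  set A := ∫ x in (0:ℝ)..1, (v' x - F' x)^2 with hA
  set B := ∫ x in (0:ℝ)..1, (v' x - F' x) * F' x with hB
  set C := ∫ x in (0:ℝ)..1, (F' x)^2 with hC
  have hsplit : ∀ c : ℝ, (∫ x in (0:ℝ)..1, (c * (v' x - F' x) + F' x) ^ 2)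
      = c^2 * A + 2 * c * B + C := by
    intro c
    have he : (fun x => (c * (v' x - F' x) + F' x) ^ 2)
        = fun x => c^2 * ((v' x - F' x)^2) + (2 * c * ((v' x - F' x) * F' x) + (F' x)^2) := by
      funext x; ring
    rw [he, intervalIntegral.integral_add ((hg2.const_mul _))
        (((hgF.const_mul _)).add hF'2),
      intervalIntegral.integral_add ((hgF.const_mul _)) hF'2,
      intervalIntegral.integral_const_mul, intervalIntegral.integral_const_mul]
    ring
  have hvsplit : (∫ x in (0:ℝ)..1, (v' x)^2) = A + 2 * B + C := by
    have h := hsplit 1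
    simpa using h
  refine ⟨?_, ?_, ?_, ?_, ?_⟩
  · intro n x hx
    have h1 : (a n / α) * (v x - F x) + F x - F x = (a n / α) * (v x - F x) := by ring
    rw [h1, abs_mul, abs_of_pos (div_pos (ha_pos n) hα)]
    calc a n / α * |v x - F x| ≤ a n / α * α :=
          mul_le_mul_of_nonneg_left (hvbd x hx) (le_of_lt (div_pos (ha_pos n) hα))
      _ = a n := div_mul_cancel₀ _ hα.ne'
  · intro n
    have hv0 : v 0 = 0 := by rw [hv 0]; simp
    rw [hv0, hF0]; ring
  · intro n; rw [hv1]; ring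
  · rw [Metric.tendstoUniformlyOn_iff]
    intro ε hε
    have hε' : 0 < ε / (α + 1) := div_pos hε (by linarith)
    have h := (Metric.tendsto_nhds.mp hc) (ε / (α + 1)) hε'
    filter_upwards [h] with n hn x hx
    rw [Real.dist_eq] at hn ⊢
    have h1 : v x - ((a n / α) * (v x - F x) + F x) = (1 - a n / α) * (v x - F x) := by ring
    rw [h1, abs_mul, abs_sub_comm 1 (a n / α)]
    have hb := hvbd x hx
    have h2 : |a n / α - 1| * (α + 1) < ε := by
      rw [lt_div_iff₀ (by linarith : (0:ℝ) < α + 1)] at hn; linarith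
    nlinarith [abs_nonneg (a n / α - 1), abs_nonneg (v x - F x)]
  · have hlim : Tendsto (fun n => ∫ x in (0:ℝ)..1, ((a n / α) * (v' x - F' x) + F' x) ^ 2)
        atTop (𝓝 (A + 2 * B + C)) := by
      have h : Tendsto (fun n => (a n / α)^2 * A + 2 * (a n / α) * B + C) atTop
          (𝓝 (1^2 * A + 2 * 1 * B + C)) := by
        exact (((hc.pow 2).mul_const A).add (((hc.const_mul 2)).mul_const B)).add_const C
      simp only [one_pow, one_mul, mul_one] at h
      refine Tendsto.congr (fun n => ?_) h
      exact (hsplit (a n / α)).symm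
    rw [hvsplit, hlim.limsup_eq]
end
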